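/- arXiv:1703.07525 — 5 statements merged into one kernel-verified Lean document; each statement's English description precedes it below -/
import Mathlib

section
/- Let n ≥ 1, N = (N_1,…,N_n) ∈ ℕ₀^n and I ⊆ {1,…,n}. Then the set 𝒥(I,N) is contained in {0,1,…,|N|+n}^n, where |N| = N_1 + ⋯ + N_n; in particular 𝒥(I,N) is a finite set. -/
/-- The set `K(N,α)` of the paper (the paper's `n` is `n + 1` here; index `j : Fin (n+1)`
corresponds to the paper's `j+1`, so the paper's `n + 1 - j` is `n + 1 - j.val`). -/
def Kset (n : ℕ) (N α : Fin (n + 1) → ℕ) : Finset (Fin (n + 1)) :=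
  Finset.univ.filter fun j =>
    (n + 1 - j.val) + ∑ i ∈ Finset.Ici j, N i = ∑ i ∈ Finset.Ici j, α i

/-- The set `L(N,α)` of the paper. -/
def Lset (n : ℕ) (N α : Fin (n + 1) → ℕ) : Finset (Fin (n + 1)) :=
  Finset.univ.filter fun j => N j + 1 ≤ α j

/-- The set `𝒥(I,N)` of the paper. -/
def Jset (n : ℕ) (I : Finset (Fin (n + 1))) (N : Fin (n + 1) → ℕ) : Set (Fin (n + 1) → ℕ) :=
  {α | Kset n N α = I ∧ (Lset n N α).card = I.card}

/-! For `α ∈ 𝒥(I,N)` each `k ∈ K` forces a coordinate `α i > N i` with `i ≥ k`, and two elements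
`k < k'` of `K` force one with `k ≤ i < k'`: the two tail-sum equations differ by `k' - k > 0` beyond
the `N`-terms. Hence `k ↦ min (L ∩ [k, n])` is strictly monotone from `K` to `L`, and since
`|L| = |K|` it is onto. So every `j ∈ L` lies above some `k ∈ K`, and then
`α j ≤ ∑_{i ≥ k} α i = (n + 1 - k) + ∑_{i ≥ k} N i ≤ |N| + n + 1`; off `L`, `α j ≤ N j`. -/

namespace Finset

variable {ι : Type*} [LinearOrder ι]

theorem sum_Ico_add_sum_Ici [LocallyFiniteOrder ι] [LocallyFiniteOrderTop ι] {M : Type*}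
    [AddCommMonoid M] (f : ι → M) {a b : ι} (h : a ≤ b) :
    ∑ i ∈ Ico a b, f i + ∑ i ∈ Ici b, f i = ∑ i ∈ Ici a, f i := by
  rw [← sum_union (disjoint_left.2 fun _ hx hx' => (mem_Ico.1 hx).2.not_ge (mem_Ici.1 hx'))]
  congr 1
  exact coe_injective (by push_cast; exact Set.Ico_union_Ici_eq_Ici h)

theorem exists_le_of_separated_of_card_le {K L : Finset ι}
    (hK : ∀ k ∈ K, ∃ i ∈ L, k ≤ i)
    (hsep : ∀ k ∈ K, ∀ k' ∈ K, k < k' → ∃ i ∈ L, k ≤ i ∧ i < k')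
    (hcard : #L ≤ #K) : ∀ j ∈ L, ∃ k ∈ K, k ≤ j := by
  have hne : ∀ k ∈ K, (L.filter (k ≤ ·)).Nonempty := fun k hk => by
    obtain ⟨i, hi, hki⟩ := hK k hk
    exact ⟨i, mem_filter.2 ⟨hi, hki⟩⟩
  let g : ∀ k ∈ K, ι := fun k hk => (L.filter (k ≤ ·)).min' (hne k hk)
  have hg : ∀ k hk, g k hk ∈ L ∧ k ≤ g k hk := fun k hk => mem_filter.1 (min'_mem _ _)
  have hg_strictMono : ∀ k k' hk hk', k < k' → g k hk < g k' hk' := by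
    intro k k' hk hk' hkk'
    obtain ⟨i, hi, hki, hik'⟩ := hsep k hk k' hk' hkk'
    calc g k hk ≤ i := min'_le _ _ (mem_filter.2 ⟨hi, hki⟩)
      _ < k' := hik'
      _ ≤ g k' hk' := (hg k' hk').2
  have hg_inj : ∀ k k' hk hk', g k hk = g k' hk' → k = k' := by
    intro k k' hk hk' h
    rcases lt_trichotomy k k' with hlt | heq | hgt
    · exact absurd h (hg_strictMono _ _ hk hk' hlt).ne
    · exact heq
    · exact absurd h (hg_strictMono _ _ hk' hk hgt).ne'
  intro j hj
  obtain ⟨k, hk, rfl⟩ := surj_on_of_inj_on_of_card_le g (fun k hk => (hg k hk).1) hg_inj hcard j hj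
  exact ⟨k, hk, (hg k hk).2⟩

end Finset

open Finset

section

variable {n : ℕ} {N α : Fin (n + 1) → ℕ}

theorem mem_Kset {j : Fin (n + 1)} :
    j ∈ Kset n N α ↔ (n + 1 - j.val) + ∑ i ∈ Ici j, N i = ∑ i ∈ Ici j, α i := by
  simp [Kset]

theorem mem_Lset {j : Fin (n + 1)} : j ∈ Lset n N α ↔ N j < α j := by
  simp [Lset]

theorem exists_mem_Lset_le_of_mem_Kset {k : Fin (n + 1)} (hk : k ∈ Kset n N α) :
    ∃ i ∈ Lset n N α, k ≤ i := by
  rw [mem_Kset] at hk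
  obtain ⟨i, hi, hNi⟩ := exists_lt_of_sum_lt (s := Ici k) (f := N) (g := α) (by omega)
  exact ⟨i, mem_Lset.2 hNi, mem_Ici.1 hi⟩

theorem exists_mem_Lset_Ico_of_mem_Kset {k k' : Fin (n + 1)} (hk : k ∈ Kset n N α)
    (hk' : k' ∈ Kset n N α) (hlt : k < k') :
    ∃ i ∈ Lset n N α, k ≤ i ∧ i < k' := by
  rw [mem_Kset, ← sum_Ico_add_sum_Ici N hlt.le, ← sum_Ico_add_sum_Ici α hlt.le] at hk
  rw [mem_Kset] at hk'
  have hval : k.val < k'.val := hlt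
  obtain ⟨i, hi, hNi⟩ := exists_lt_of_sum_lt (s := Ico k k') (f := N) (g := α) (by omega)
  exact ⟨i, mem_Lset.2 hNi, mem_Ico.1 hi⟩

theorem le_sum_add_of_mem_Jset {I : Finset (Fin (n + 1))} (hα : α ∈ Jset n I N)
    (j : Fin (n + 1)) : α j ≤ (∑ i, N i) + (n + 1) := by
  obtain ⟨hK, hL⟩ := hα
  have hN_tail : ∀ k, ∑ i ∈ Ici k, N i ≤ ∑ i, N i := fun k =>
    sum_le_sum_of_subset (subset_univ _)
  by_cases hj : j ∈ Lset n N α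
  · obtain ⟨k, hk, hkj⟩ := exists_le_of_separated_of_card_le
      (fun _ => exists_mem_Lset_le_of_mem_Kset)
      (fun _ hk _ hk' => exists_mem_Lset_Ico_of_mem_Kset hk hk')
      (by rw [hL, hK]) j hj
    have hα_tail : α j ≤ ∑ i ∈ Ici k, α i :=
      single_le_sum (fun _ _ => Nat.zero_le _) (mem_Ici.2 hkj)
    rw [← mem_Kset.1 hk] at hα_tail
    have hNk := hN_tail k
    omega
  · have hNj : N j ≤ ∑ i, N i := single_le_sum (fun _ _ => Nat.zero_le _) (mem_univ j)
    have hαj := mem_Lset.not.1 hj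
    omega

end

/-- `𝒥(I,N) ⊆ {0,…,|N|+n}^n` (here `|N| + n_paper = ∑ N + (n+1)`);
in particular `𝒥(I,N)` is a finite set. -/
theorem stmt1 (n : ℕ) (N : Fin (n + 1) → ℕ) (I : Finset (Fin (n + 1))) :
    (Jset n I N ⊆ {α | ∀ j, α j ≤ (∑ j, N j) + (n + 1)}) ∧ (Jset n I N).Finite := by
  have hsub : Jset n I N ⊆ {α | ∀ j, α j ≤ (∑ j, N j) + (n + 1)} :=
    fun _ hα => le_sum_add_of_mem_Jset hα
  exact ⟨hsub, (Set.finite_Iic _).subset hsub⟩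
end

section
/- Let n ≥ 1, N ∈ ℕ₀^n, α ∈ ℕ₀^n, and θ = (θ_1,…,θ_n) ∈ ℂ^n with θ_j + ⋯ + θ_n ≠ 0 for all j = 1,…,n. Set δ = (1/2) min{(1+|θ_j|)^{−1}, |θ_j+⋯+θ_n|^{−1} : j = 1,…,n} and U_δ = {t ∈ ℂ : |t| < δ}, and let q = |K(N,α)|, q' = |L(N,α)|. Then the function G_{N,α,θ}, a priori defined on U_δ \ {0}, extends to an analytic function on U_δ, and there is a constant C > 0 depending only on N and θ (not on α) such that |G_{N,α,θ}(t)| ≤ C |t|^{q'−q} for all t ∈ U_δ. -/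
/-- Generalized binomial coefficient `binom(z, m) = z(z−1)⋯(z−m+1)/m!`. -/
noncomputable def cbinom (z : ℂ) (m : ℕ) : ℂ :=
  (∏ k ∈ Finset.range m, (z - (k : ℂ))) / (m.factorial : ℂ)

/-- `δ = (1/2) min_j { (1+|θ_j|)⁻¹, |θ_j+⋯+θ_n|⁻¹ }`. -/
noncomputable def deltaOf (n : ℕ) (θ : Fin (n + 1) → ℂ) : ℝ :=
  (1 / 2) *
    Finset.univ.inf' Finset.univ_nonempty fun j : Fin (n + 1) =>
      min (1 + ‖θ j‖)⁻¹ (‖∑ i ∈ Finset.Ici j, θ i‖)⁻¹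

/-- The function `G_{N,α,θ}` of the paper, defined a priori away from `t = 0`. -/
noncomputable def Gfun (n : ℕ) (N α : Fin (n + 1) → ℕ) (θ : Fin (n + 1) → ℂ) (t : ℂ) : ℂ :=
  (∏ j, cbinom ((N j : ℂ) - t * θ j) (α j)) /
    ∏ j : Fin (n + 1),
      (t - ((∑ i ∈ Finset.Ici j, (N i : ℂ)) + ((n : ℂ) + 1 - (j.val : ℂ)) -
            ∑ i ∈ Finset.Ici j, (α i : ℂ)) / ∑ i ∈ Finset.Ici j, θ i)

/-!
Write `e i = α i - N i - 1`. The `j`-th denominator factor of `G` is `t + (∑_{i ≥ j} e i) / S_j`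
with `S_j = θ_j + ⋯ + θ_n`: its root is `0` exactly when `j ∈ K`, and otherwise, having a
nonzero integer numerator, it lies at distance at least `1 / |S_j| ≥ 2δ` from `0`. So on `U_δ`
the denominator is `t^q` times a function of modulus at least `δ^(n+1)`. In the numerator,
`binom(N_j - tθ_j, α_j)` has the factor `-tθ_j` exactly when `j ∈ L`, and since `|tθ_j| ≤ 1` the
other factors, divided by `α_j!`, are bounded independently of `α_j`. Finally `q ≤ q'`, because
sending `j ∈ K` to the first `i ≥ j` with `e i ≥ 0` is injective.
-/

open Finset Metric
open scoped Nat

lemma prod_range_abs_sub_add_one_le (N a : ℕ) :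
    ∏ k ∈ range a, (|(N : ℝ) - k| + 1) ≤ ((N : ℝ) + 1) ^ (N + 1) * a ! := by
  calc ∏ k ∈ range a, (|(N : ℝ) - k| + 1)
      ≤ ∏ k ∈ range a, ((if k ≤ N then (N : ℝ) + 1 else 1) * (k + 1)) := by
        gcongr with k
        split_ifs with hk
        · have hk' : (k : ℝ) ≤ N := by exact_mod_cast hk
          rw [abs_of_nonneg (by linarith)]
          nlinarith [(k.cast_nonneg : (0 : ℝ) ≤ k)]
        · have hk' : (N : ℝ) < k := by exact_mod_cast not_le.mp hk
          rw [abs_of_neg (by linarith)]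
          linarith [(N.cast_nonneg : (0 : ℝ) ≤ N)]
    _ = ((N : ℝ) + 1) ^ #{k ∈ range a | k ≤ N} * a ! := by
        rw [prod_mul_distrib, prod_ite, prod_const, prod_const_one, mul_one,
          ← prod_range_add_one_eq_factorial]
        push_cast
        rfl
    _ ≤ ((N : ℝ) + 1) ^ (N + 1) * a ! := by
        gcongr
        · linarith [(N.cast_nonneg : (0 : ℝ) ≤ N)]
        · calc #{k ∈ range a | k ≤ N} ≤ #(range (N + 1)) :=
                card_le_card fun k hk => by simp at hk ⊢; omega
            _ = N + 1 := card_range _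

noncomputable def binomCofactor (N a : ℕ) (θ t : ℂ) : ℂ :=
  (if N < a then -θ else 1) * ((∏ k ∈ (range a).erase N, ((N : ℂ) - t * θ - k)) / a !)

lemma cbinom_natCast_sub_mul (N a : ℕ) (θ t : ℂ) :
    cbinom (N - t * θ) a = (if N < a then t else 1) * binomCofactor N a θ t := by
  unfold cbinom binomCofactor
  split_ifs with h
  · rw [← mul_prod_erase _ _ (mem_range.mpr h)]
    ring
  · rw [erase_eq_of_notMem (by simpa using h)]
    ring

lemma norm_binomCofactor_le {N a : ℕ} {θ t : ℂ} (ht : ‖t * θ‖ ≤ 1) :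
    ‖binomCofactor N a θ t‖ ≤ (1 + ‖θ‖) * ((N : ℝ) + 1) ^ (N + 1) := by
  have hfactor (k : ℕ) : ‖(N : ℂ) - t * θ - k‖ ≤ |(N : ℝ) - k| + 1 := by
    calc ‖(N : ℂ) - t * θ - k‖ = ‖(((N : ℝ) - k : ℝ) : ℂ) - t * θ‖ := by push_cast; ring_nf
      _ ≤ |(N : ℝ) - k| + 1 := by
        grw [norm_sub_le, Complex.norm_real, Real.norm_eq_abs, ht]
  have hprod : ‖∏ k ∈ (range a).erase N, ((N : ℂ) - t * θ - k)‖ ≤ ((N : ℝ) + 1) ^ (N + 1) * a ! :=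
    calc ‖∏ k ∈ (range a).erase N, ((N : ℂ) - t * θ - k)‖
        ≤ ∏ k ∈ (range a).erase N, (|(N : ℝ) - k| + 1) := by
          rw [norm_prod]; exact prod_le_prod (fun _ _ => norm_nonneg _) fun k _ => hfactor k
      _ ≤ ∏ k ∈ range a, (|(N : ℝ) - k| + 1) :=
          prod_le_prod_of_subset_of_one_le (erase_subset _ _)
            (fun k _ => by positivity) fun k _ _ => by linarith [abs_nonneg ((N : ℝ) - k)]
      _ ≤ ((N : ℝ) + 1) ^ (N + 1) * a ! := prod_range_abs_sub_add_one_le N a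
  have hsign : ‖(if N < a then -θ else 1 : ℂ)‖ ≤ 1 + ‖θ‖ := by
    split_ifs <;> simp
  unfold binomCofactor
  rw [norm_mul, norm_div, Complex.norm_natCast]
  gcongr
  rwa [div_le_iff₀ (by positivity)]

@[fun_prop]
lemma differentiable_binomCofactor (N a : ℕ) (θ : ℂ) :
    Differentiable ℂ (binomCofactor N a θ) := by
  unfold binomCofactor
  fun_prop

theorem card_filter_sum_Ici_eq_zero_le {ι : Type*} [Fintype ι] [LinearOrder ι]
    [LocallyFiniteOrderTop ι] (e : ι → ℤ) :
    #{j | ∑ i ∈ Ici j, e i = 0} ≤ #{j | 0 ≤ e j} := by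
  -- match `j` with the first `i ≥ j` at which `e` is nonnegative
  let FirstNonneg (j i : ι) : Prop := j ≤ i ∧ ∀ k, j ≤ k → k < i → e k < 0
  refine card_le_card_of_forall_subsingleton FirstNonneg (fun j hj => ?_) ?_
  · simp only [mem_filter, mem_univ, true_and] at hj
    have hne : {i ∈ Ici j | 0 ≤ e i}.Nonempty := by
      by_contra! hempty
      rw [filter_eq_empty_iff] at hempty
      have : ∑ i ∈ Ici j, e i < 0 := sum_neg (fun i hi => not_le.1 (hempty hi)) ⟨j, by simp⟩
      omega
    obtain ⟨hi, hnonneg⟩ := mem_filter.1 (min'_mem _ hne)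
    refine ⟨_, by simpa using hnonneg, mem_Ici.1 hi, fun k hjk hk => not_le.1 fun h => ?_⟩
    exact (min'_le _ k (mem_filter.2 ⟨mem_Ici.2 hjk, h⟩)).not_gt hk
  · intro i _ j₁ ⟨hj₁, h₁⟩ j₂ ⟨hj₂, h₂⟩
    simp only [mem_filter, mem_univ, true_and] at hj₁ hj₂
    -- between two zeros of the tail sum matched with the same `i`, all terms are negative
    have not_lt_of_match : ∀ {j j'}, ∑ i ∈ Ici j, e i = 0 → ∑ i ∈ Ici j', e i = 0 →
        FirstNonneg j i → FirstNonneg j' i → ¬ j < j' := by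
      intro j j' hj hj' h h' hlt
      have hsplit := sum_sdiff (f := e) (Ici_subset_Ici.2 hlt.le)
      have hneg : ∑ k ∈ Ici j \ Ici j', e k < 0 :=
        sum_neg (fun k hk => by
          simp only [mem_sdiff, mem_Ici, not_le] at hk
          exact h.2 k hk.1 (hk.2.trans_le h'.1)) ⟨j, by simp [hlt]⟩
      omega
    exact le_antisymm (not_lt.1 (not_lt_of_match hj₂ hj₁ h₂ h₁))
      (not_lt.1 (not_lt_of_match hj₁ hj₂ h₁ h₂))

lemma le_norm_intCast_div {m : ℤ} {s : ℂ} {r : ℝ} (hms : (m : ℂ) / s ≠ 0) (hr : r * ‖s‖ ≤ 1) :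
    r ≤ ‖(m : ℂ) / s‖ := by
  obtain ⟨hm, hs⟩ := div_ne_zero_iff.1 hms
  have hm1 : (1 : ℝ) ≤ ‖(m : ℂ)‖ := by
    rw [Complex.norm_intCast]; exact_mod_cast Int.one_le_abs (by exact_mod_cast hm)
  rw [norm_div, le_div_iff₀ (norm_pos_iff.2 hs)]
  linarith

lemma prod_add_eq_pow_mul_prod_filter {ι : Type*} [Fintype ι] (c : ι → ℂ) (t : ℂ) :
    ∏ j, (t + c j) = t ^ #{j | c j = 0} * ∏ j ∈ {j | c j ≠ 0}, (t + c j) := by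
  rw [← prod_filter_mul_prod_filter_not univ (fun j => c j = 0)]
  congr 1
  rw [← prod_const]
  exact prod_congr rfl fun j hj => by simp [(mem_filter.1 hj).2]

lemma pow_card_le_norm_prod_filter {ι : Type*} [Fintype ι] {c : ι → ℂ} {δ : ℝ} {t : ℂ}
    (hδ : 0 ≤ δ) (hδ1 : δ ≤ 1) (hc : ∀ j, c j ≠ 0 → 2 * δ ≤ ‖c j‖) (ht : ‖t‖ < δ) :
    δ ^ Fintype.card ι ≤ ‖∏ j ∈ {j | c j ≠ 0}, (t + c j)‖ := by
  calc δ ^ Fintype.card ι ≤ δ ^ #{j | c j ≠ 0} := pow_le_pow_of_le_one hδ hδ1 (card_le_univ _)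
    _ = ∏ j ∈ {j | c j ≠ 0}, δ := (prod_const _).symm
    _ ≤ ∏ j ∈ {j | c j ≠ 0}, ‖t + c j‖ := by
        refine prod_le_prod (fun _ _ => hδ) fun j hj => ?_
        have hcj := hc j (mem_filter.1 hj).2
        have := norm_sub_le (t + c j) t
        rw [add_sub_cancel_left] at this
        linarith
    _ = _ := (norm_prod _ _).symm

lemma exists_differentiableOn_eq_pow_mul_div {r B b : ℝ} {p q : ℕ} {f A D : ℂ → ℂ}
    (hpq : q ≤ p) (hA : DifferentiableOn ℂ A (ball 0 r)) (hD : DifferentiableOn ℂ D (ball 0 r))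
    (hAB : ∀ t ∈ ball (0 : ℂ) r, ‖A t‖ ≤ B) (hb : 0 < b) (hDb : ∀ t ∈ ball (0 : ℂ) r, b ≤ ‖D t‖)
    (hf : ∀ t ∈ ball (0 : ℂ) r, t ≠ 0 → f t = t ^ p * A t / (t ^ q * D t)) :
    ∃ G : ℂ → ℂ, DifferentiableOn ℂ G (ball 0 r) ∧ (∀ t ∈ ball (0 : ℂ) r, t ≠ 0 → G t = f t) ∧
      ∀ t ∈ ball (0 : ℂ) r, ‖G t‖ ≤ B / b * ‖t‖ ^ ((p : ℝ) - q) := by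
  have hD0 : ∀ t ∈ ball (0 : ℂ) r, D t ≠ 0 := fun t ht h => by
    have := hDb t ht
    rw [h, norm_zero] at this
    linarith
  obtain ⟨k, rfl⟩ := Nat.exists_eq_add_of_le hpq
  refine ⟨fun t => t ^ k * (A t / D t), (differentiableOn_pow _).mul (hA.div hD hD0),
    fun t ht ht0 => ?_, fun t ht => ?_⟩
  · rw [hf t ht ht0, pow_add]
    field_simp [hD0 t ht]
  · have hB : 0 ≤ B := (norm_nonneg _).trans (hAB t ht)
    rw [Nat.cast_add, add_sub_cancel_left, Real.rpow_natCast, norm_mul, norm_pow, norm_div,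
      mul_comm]
    gcongr
    exacts [hAB t ht, hDb t ht]

def excess {ι : Type*} (N α : ι → ℕ) (i : ι) : ℤ := α i - N i - 1

section
variable {n : ℕ} {N α : Fin (n + 1) → ℕ}

lemma mem_Lset_iff {j : Fin (n + 1)} : j ∈ Lset n N α ↔ 0 ≤ excess N α j := by
  simp only [Lset, excess, mem_filter, mem_univ, true_and]
  omega

lemma mem_Kset_iff {j : Fin (n + 1)} : j ∈ Kset n N α ↔ ∑ i ∈ Ici j, excess N α i = 0 := by
  have hj : (j : ℕ) ≤ n + 1 := j.is_lt.le
  simp only [Kset, excess, mem_filter, mem_univ, true_and, sum_sub_distrib, sum_const,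
    Fin.card_Ici, nsmul_eq_mul, mul_one]
  rw [← Nat.cast_inj (R := ℤ)]
  push_cast [Nat.cast_sub hj]
  omega

lemma card_Kset_le_card_Lset : #(Kset n N α) ≤ #(Lset n N α) := by
  have hK : Kset n N α = ({j | ∑ i ∈ Ici j, excess N α i = 0} : Finset _) := by
    ext; simp [mem_Kset_iff]
  have hL : Lset n N α = ({j | 0 ≤ excess N α j} : Finset _) := by ext; simp [mem_Lset_iff]
  rw [hK, hL]
  exact card_filter_sum_Ici_eq_zero_le _

lemma Gfun_eq (θ : Fin (n + 1) → ℂ) (t : ℂ) :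
    Gfun n N α θ t = (∏ j, cbinom (N j - t * θ j) (α j)) /
      ∏ j, (t + ((∑ i ∈ Ici j, excess N α i : ℤ) : ℂ) / ∑ i ∈ Ici j, θ i) := by
  unfold Gfun
  congr 1
  refine prod_congr rfl fun j _ => ?_
  have hj : (j : ℕ) ≤ n + 1 := j.is_lt.le
  simp only [excess, sum_sub_distrib, sum_const, Fin.card_Ici, nsmul_eq_mul, mul_one]
  push_cast [Nat.cast_sub hj]
  ring

lemma prod_cbinom_eq_pow_mul (θ : Fin (n + 1) → ℂ) (t : ℂ) :
    ∏ j, cbinom (N j - t * θ j) (α j) =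
      t ^ #(Lset n N α) * ∏ j, binomCofactor (N j) (α j) (θ j) t := by
  simp only [cbinom_natCast_sub_mul, prod_mul_distrib, prod_ite, prod_const, one_pow, mul_one]
  rfl

end

section
variable {n : ℕ} {θ : Fin (n + 1) → ℂ}

lemma deltaOf_le (j : Fin (n + 1)) :
    deltaOf n θ ≤ 1 / 2 * min (1 + ‖θ j‖)⁻¹ (‖∑ i ∈ Ici j, θ i‖)⁻¹ := by
  unfold deltaOf
  gcongr
  exact inf'_le _ (mem_univ j)

lemma deltaOf_pos (hθ : ∀ j, ∑ i ∈ Ici j, θ i ≠ 0) : 0 < deltaOf n θ := by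
  unfold deltaOf
  refine mul_pos one_half_pos ((lt_inf'_iff _).2 fun j _ => lt_min ?_ ?_)
  · positivity
  · exact inv_pos.2 (norm_pos_iff.2 (hθ j))

private lemma two_mul_mul_le_one {d x : ℝ} (hx : 0 ≤ x) (h : d ≤ 1 / 2 * x⁻¹) : 2 * d * x ≤ 1 := by
  calc 2 * d * x ≤ x⁻¹ * x := by nlinarith
    _ ≤ 1 := inv_mul_le_one_of_le₀ le_rfl hx

lemma two_mul_deltaOf_mul_one_add_norm_le (j : Fin (n + 1)) :
    2 * deltaOf n θ * (1 + ‖θ j‖) ≤ 1 :=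
  two_mul_mul_le_one (by positivity) ((deltaOf_le j).trans (by gcongr; exact min_le_left ..))

lemma two_mul_deltaOf_mul_norm_sum_le (j : Fin (n + 1)) :
    2 * deltaOf n θ * ‖∑ i ∈ Ici j, θ i‖ ≤ 1 :=
  two_mul_mul_le_one (by positivity) ((deltaOf_le j).trans (by gcongr; exact min_le_right ..))

lemma norm_mul_le_one_of_mem_ball {t : ℂ}
    (ht : t ∈ ball 0 (deltaOf n θ)) (j : Fin (n + 1)) : ‖t * θ j‖ ≤ 1 := by
  rw [mem_ball_zero_iff] at ht
  rw [norm_mul]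
  nlinarith [two_mul_deltaOf_mul_one_add_norm_le (θ := θ) j, norm_nonneg t, norm_nonneg (θ j)]

end

/-- `G_{N,α,θ}` extends analytically to the disk `U_δ`, and there is a constant
`C > 0` depending only on `N` and `θ` (not on `α`) with `|G(t)| ≤ C |t|^(q'−q)` on `U_δ`,
where `q = |K(N,α)|`, `q' = |L(N,α)|`. -/
theorem stmt3 (n : ℕ) (N : Fin (n + 1) → ℕ) (θ : Fin (n + 1) → ℂ)
    (hθ : ∀ j : Fin (n + 1), ∑ i ∈ Finset.Ici j, θ i ≠ 0) :
    ∃ C > (0 : ℝ), ∀ α : Fin (n + 1) → ℕ,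
      ∃ G : ℂ → ℂ,
        DifferentiableOn ℂ G (Metric.ball 0 (deltaOf n θ)) ∧
        (∀ t ∈ Metric.ball (0 : ℂ) (deltaOf n θ), t ≠ 0 → G t = Gfun n N α θ t) ∧
        ∀ t ∈ Metric.ball (0 : ℂ) (deltaOf n θ),
          ‖G t‖ ≤
            C * ‖t‖ ^ (((Lset n N α).card : ℝ) - ((Kset n N α).card : ℝ)) := by
  set δ := deltaOf n θ
  have hδ : 0 < δ := deltaOf_pos hθ
  have hδ1 : δ ≤ 1 := by
    nlinarith [two_mul_deltaOf_mul_one_add_norm_le (θ := θ) 0, norm_nonneg (θ 0)]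
  refine ⟨(∏ j, (1 + ‖θ j‖) * ((N j : ℝ) + 1) ^ (N j + 1)) / δ ^ (n + 1), by positivity,
    fun α => ?_⟩
  set c : Fin (n + 1) → ℂ := fun j => ((∑ i ∈ Ici j, excess N α i : ℤ) : ℂ) / ∑ i ∈ Ici j, θ i
  have hK : ({j | c j = 0} : Finset _) = Kset n N α := by
    ext j
    simp only [c, mem_filter, mem_univ, true_and, div_eq_zero_iff, hθ j, or_false,
      Int.cast_eq_zero, mem_Kset_iff]
  refine exists_differentiableOn_eq_pow_mul_div card_Kset_le_card_Lset
    (A := fun t => ∏ j, binomCofactor (N j) (α j) (θ j) t)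
    (D := fun t => ∏ j ∈ {j | c j ≠ 0}, (t + c j))
    (by fun_prop) (by fun_prop) (fun t ht => ?_) (pow_pos hδ _) (fun t ht => ?_)
    (fun t _ _ => ?_)
  · rw [norm_prod]
    exact prod_le_prod (fun _ _ => norm_nonneg _) fun j _ =>
      norm_binomCofactor_le (norm_mul_le_one_of_mem_ball ht j)
  · simpa only [Fintype.card_fin] using pow_card_le_norm_prod_filter (c := c) hδ.le hδ1
      (fun j hj => le_norm_intCast_div hj (two_mul_deltaOf_mul_norm_sum_le j))
      (mem_ball_zero_iff.1 ht)
  · rw [Gfun_eq, prod_add_eq_pow_mul_prod_filter, hK, prod_cbinom_eq_pow_mul]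
end

section
/- Let N ∈ ℕ₀, α ∈ ℕ₀, and t, θ ∈ ℂ with |tθ| ≤ 1. If α ≤ N then |binom(N − tθ, α)| ≤ (N+1)!; and if α ≥ N + 1 then |binom(N − tθ, α)| ≤ (N+1)|tθ|. -/
/-!
Put `z = N - tθ`, a point of the closed unit disc around `N`. Each factor satisfies
`‖z - k‖ ≤ |N - k| + 1`, so the first `N + 1` factors are bounded by `N + 1, N, …, 1` and
`‖binom(z, m)‖ ≤ binom(N + 1, m) ≤ (N + 1)!` for `m ≤ N + 1`. The factor with `k = N` has norm
exactly `‖tθ‖`, which gives `‖binom(z, N + 1)‖ ≤ ‖tθ‖`; beyond that each new factor `(z - m) / (m + 1)` has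
norm at most `(m - N + 1) / (m + 1) ≤ 1`, so the bound persists for all `m ≥ N + 1`.
-/

open Finset
open scoped Nat

theorem Nat.choose_le_factorial (n k : ℕ) : n.choose k ≤ n ! := by
  rcases le_or_gt k n with hk | hk
  · refine Nat.le_of_dvd n.factorial_pos ⟨k ! * (n - k)!, ?_⟩
    rw [← Nat.choose_mul_factorial_mul_factorial hk, mul_assoc]
  · simp [Nat.choose_eq_zero_of_lt hk]

namespace cbinom

theorem succ (z : ℂ) (m : ℕ) :
    cbinom z (m + 1) = cbinom z m * (z - m) / ((m + 1 : ℕ) : ℂ) := by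
  simp only [cbinom, prod_range_succ, Nat.factorial_succ]
  push_cast
  field_simp

theorem norm_eq (z : ℂ) (m : ℕ) : ‖cbinom z m‖ = (∏ k ∈ range m, ‖z - k‖) / m ! := by
  rw [cbinom, norm_div, norm_prod, Complex.norm_natCast]

variable {z : ℂ} {N : ℕ}

theorem norm_sub_natCast_le (hz : ‖z - N‖ ≤ 1) (k : ℕ) : ‖z - k‖ ≤ |(N : ℝ) - k| + 1 :=
  calc ‖z - k‖ = ‖(z - N) + ((N - k : ℝ) : ℂ)‖ := by push_cast; ring_nf
    _ ≤ ‖z - N‖ + |(N : ℝ) - k| :=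
      (norm_add_le _ _).trans_eq (by rw [Complex.norm_real, Real.norm_eq_abs])
    _ ≤ |(N : ℝ) - k| + 1 := by linarith

theorem prod_norm_sub_natCast_le_descFactorial (hz : ‖z - N‖ ≤ 1) {m : ℕ} (hm : m ≤ N + 1) :
    ∏ k ∈ range m, ‖z - k‖ ≤ (N + 1).descFactorial m := by
  rw [Nat.descFactorial_eq_prod_range, Nat.cast_prod]
  refine prod_le_prod (fun _ _ => norm_nonneg _) fun k hk => ?_
  have hkN : k ≤ N := Nat.lt_succ_iff.mp ((mem_range.mp hk).trans_le hm)
  calc ‖z - k‖ ≤ |(N : ℝ) - k| + 1 := norm_sub_natCast_le hz k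
    _ = ((N + 1 - k : ℕ) : ℝ) := by
      rw [abs_of_nonneg (sub_nonneg.mpr (by exact_mod_cast hkN)), Nat.cast_sub (by omega)]
      push_cast; ring

theorem norm_le_choose (hz : ‖z - N‖ ≤ 1) {m : ℕ} (hm : m ≤ N + 1) :
    ‖cbinom z m‖ ≤ (N + 1).choose m := by
  rw [norm_eq, div_le_iff₀ (by positivity), mul_comm, ← Nat.cast_mul,
    ← Nat.descFactorial_eq_factorial_mul_choose]
  exact prod_norm_sub_natCast_le_descFactorial hz hm

theorem norm_le_factorial (hz : ‖z - N‖ ≤ 1) {m : ℕ} (hm : m ≤ N + 1) :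
    ‖cbinom z m‖ ≤ (N + 1)! :=
  (norm_le_choose hz hm).trans (by exact_mod_cast Nat.choose_le_factorial _ _)

theorem norm_le_norm_sub (hz : ‖z - N‖ ≤ 1) {m : ℕ} (hm : N + 1 ≤ m) :
    ‖cbinom z m‖ ≤ ‖z - N‖ := by
  induction m, hm using Nat.le_induction with
  | base =>
    have hN := norm_le_choose hz (Nat.le_succ N)
    rw [Nat.choose_succ_self_right] at hN
    rw [succ, norm_div, norm_mul, Complex.norm_natCast, div_le_iff₀ (by positivity),
      mul_comm ‖z - N‖]
    exact mul_le_mul_of_nonneg_right hN (norm_nonneg _)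
  | succ m hm ih =>
    have hNm : (N : ℝ) ≤ m := by exact_mod_cast (Nat.le_succ N).trans hm
    have hfactor : ‖z - m‖ ≤ m + 1 := by
      have := norm_sub_natCast_le hz m
      rw [abs_of_nonpos (sub_nonpos.mpr hNm)] at this
      linarith [N.cast_nonneg (α := ℝ)]
    rw [succ, norm_div, norm_mul, Complex.norm_natCast, div_le_iff₀ (by positivity)]
    push_cast
    exact mul_le_mul ih hfactor (norm_nonneg _) (norm_nonneg _)

end cbinom

/-- for `|tθ| ≤ 1`: if `α ≤ N` then `|binom(N − tθ, α)| ≤ (N+1)!`, and if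
`α ≥ N + 1` then `|binom(N − tθ, α)| ≤ (N+1)|tθ|`. -/
theorem stmt7 (N α : ℕ) (t θ : ℂ) (h : ‖t * θ‖ ≤ 1) :
    (α ≤ N → ‖cbinom ((N : ℂ) - t * θ) α‖ ≤ ((N + 1).factorial : ℝ)) ∧
    (N + 1 ≤ α →
      ‖cbinom ((N : ℂ) - t * θ) α‖ ≤ ((N : ℝ) + 1) * ‖t * θ‖) := by
  have hz : ‖(N : ℂ) - t * θ - N‖ = ‖t * θ‖ := by rw [sub_sub_cancel_left, norm_neg]
  refine ⟨fun hα => cbinom.norm_le_factorial (hz.trans_le h) (hα.trans (Nat.le_succ N)),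
    fun hα => ?_⟩
  calc ‖cbinom ((N : ℂ) - t * θ) α‖ ≤ ‖t * θ‖ :=
        hz ▸ cbinom.norm_le_norm_sub (hz.trans_le h) hα
    _ ≤ ((N : ℝ) + 1) * ‖t * θ‖ :=
        le_mul_of_one_le_left (norm_nonneg _) (by linarith [N.cast_nonneg (α := ℝ)])
end

section
/- Let N ∈ ℕ₀, α ∈ ℕ₀ with α ≥ N + 1, and θ ∈ ℂ. Then lim_{t→0, t≠0} (1/t) · binom(N − tθ, α) = (−1)^{α−N} θ / ( α · binom(α−1, N) ). -/
/-!
The polynomial `z ↦ binom(z, α)` has a simple root at `z = N`: splitting off the factor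
`z - N = -tθ` leaves a continuous function of `t`, whose value at `t = 0` is
`N! · (-1)^(α-1-N) (α-1-N)! / α!`, and `α! = α · binom(α-1, N) · N! · (α-1-N)!`.
-/

open Topology

open Finset Filter

section
variable {R : Type*} [CommRing R]

theorem Finset.prod_range_natCast_sub_self (n : ℕ) :
    ∏ k ∈ range n, ((n : R) - k) = n.factorial := by
  rw [prod_range_natCast_sub, ← Nat.descFactorial_eq_prod_range, Nat.descFactorial_self]

theorem Finset.prod_Ico_natCast_sub (m n : ℕ) :
    ∏ k ∈ Ico (m + 1) n, ((m : R) - k) = (-1) ^ (n - (m + 1)) * (n - (m + 1)).factorial := by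
  have hneg := prod_neg (s := range (n - (m + 1))) fun i => ((i + 1 : ℕ) : R)
  rw [card_range] at hneg
  rw [prod_Ico_eq_prod_range, ← prod_range_add_one_eq_factorial, Nat.cast_prod, ← hneg]
  exact prod_congr rfl fun j _ => by push_cast; ring

end

theorem Nat.factorial_eq_mul_choose_pred_mul {m n : ℕ} (h : m < n) :
    n.factorial = n * (n - 1).choose m * m.factorial * (n - (m + 1)).factorial := by
  rw [← Nat.mul_factorial_pred (by omega : n ≠ 0),
    ← Nat.choose_mul_factorial_mul_factorial (by omega : m ≤ n - 1), Nat.sub_sub, add_comm 1 m]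
  ring

theorem cbinom_eq_sub_mul {m n : ℕ} (h : m < n) (z : ℂ) :
    cbinom z n = (z - m) * ((∏ k ∈ range m, (z - k)) * (∏ k ∈ Ico (m + 1) n, (z - k)) /
      n.factorial) := by
  rw [cbinom, ← prod_range_mul_prod_Ico _ (Nat.succ_le_of_lt h), prod_range_succ]
  ring

/-- for `α ≥ N + 1`,
`lim_{t→0, t≠0} (1/t) binom(N − tθ, α) = (−1)^{α−N} θ / (α · binom(α−1, N))`. -/
theorem stmt8 (N α : ℕ) (hα : N + 1 ≤ α) (θ : ℂ) :
    Filter.Tendsto (fun t : ℂ => t⁻¹ * cbinom ((N : ℂ) - t * θ) α) (𝓝[≠] (0 : ℂ))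
      (𝓝 ((-1 : ℂ) ^ (α - N) * θ / ((α : ℂ) * ((α - 1).choose N : ℂ)))) := by
  set g : ℂ → ℂ := fun z =>
    (∏ k ∈ range N, (z - k)) * (∏ k ∈ Ico (N + 1) α, (z - k)) / α.factorial
  have hg_natCast : -θ * g N = (-1 : ℂ) ^ (α - N) * θ / ((α : ℂ) * ((α - 1).choose N : ℂ)) := by
    have hchoose : ((α - 1).choose N : ℂ) ≠ 0 := by
      exact_mod_cast (Nat.choose_pos (by omega : N ≤ α - 1)).ne'
    have hα0 : (α : ℂ) ≠ 0 := by exact_mod_cast (by omega : α ≠ 0)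
    simp only [g, prod_range_natCast_sub_self, prod_Ico_natCast_sub,
      Nat.factorial_eq_mul_choose_pred_mul hα, show α - N = α - (N + 1) + 1 by omega]
    push_cast
    field_simp [Nat.factorial_ne_zero]
    ring
  have hslope : ∀ t ∈ ({0}ᶜ : Set ℂ), t⁻¹ * cbinom (N - t * θ) α = -θ * g (N - t * θ) := by
    intro t ht
    rw [cbinom_eq_sub_mul hα]
    field_simp [show t ≠ 0 from ht]
    ring
  rw [← hg_natCast]
  refine tendsto_nhdsWithin_congr (fun t ht => (hslope t ht).symm) ?_
  have hcont : Continuous fun t : ℂ => -θ * g (N - t * θ) := by fun_prop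
  simpa using (hcont.tendsto 0).mono_left nhdsWithin_le_nhds
end

section
/- Let q ∈ ℕ (so n = 1), (u, γ) = ((u_1,…,u_q), γ) with Re(γ) > 0 and Re(u_k + γ) > 0 for all k, K ∈ ℕ₀, and s = (s_1,…,s_q) ∈ ℂ^q with Re(s_1+⋯+s_q) > 1. Then Z_{1,q}(s;u;γ) = Σ_{α ∈ ℕ₀^q, |α| ≤ K} binom(−s,α) u^α γ^{−|s|−|α|} ζ(|s|+|α|) + (K+1) Σ_{α ∈ ℕ₀^q, |α| = K+1} binom(−s,α) u^α R_K(s;u;γ;α), where R_K(s;u;γ;α) = Σ_{m ≥ 1} ∫_0^1 (1−y)^K ∏_{k=1}^q (γ m + u_k y)^{−s_k−α_k} dy, and ζ is the Riemann zeta-function. -/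
/-!
Fix `m`, put `c = γ (m + 1)` and `g(y) = ∏ₖ (c + uₖ y) ^ (-sₖ)` for `y ∈ [0, 1]`. Differentiating
the product factor by factor and reindexing by `α ↦ α + eₜ`, which turns
`(αₜ + 1) binom(-s, α + eₜ)` into `(-sₜ - αₜ) binom(-s, α)`, gives
`g⁽ʲ⁾(y) / j! = ∑_{|α| = j} binom(-s, α) u^α ∏ₖ (c + uₖ y) ^ (-sₖ - αₖ)`,
so Taylor's formula with integral remainder at `y = 1` expands the `m`-th term of `Z_{1,q}`.
At `y = 0` the Taylor terms are `binom(-s, α) u^α γ^{-|s|-|α|} (m + 1)^{-|s|-|α|}`, which sum over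
`m` to the zeta values. The remainders are `O((m + 1)^{-Re |s| - K - 1})`, since
`c + uₖ y = (m + 1) (γ + uₖ y / (m + 1))` and the second factor stays in a compact subset of the
right half-plane.
-/

open Finset Finset.Nat intervalIntegral

lemma cbinom_zero (z : ℂ) : cbinom z 0 = 1 := by simp [cbinom]

lemma succ_mul_cbinom_succ (z : ℂ) (n : ℕ) :
    ((n : ℂ) + 1) * cbinom z (n + 1) = (z - n) * cbinom z n := by
  rw [cbinom, cbinom, prod_range_succ, Nat.factorial_succ]
  push_cast
  field_simp

section MultiIndex

variable {q : ℕ}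

lemma sum_add_single (α : Fin q → ℕ) (t : Fin q) :
    ∑ k, (α + Pi.single t 1 : Fin q → ℕ) k = ∑ k, α k + 1 := by
  simp [sum_add_distrib]

lemma prod_apply_add_single {M : Type*} [CommMonoid M] (f : Fin q → ℕ → M)
    (α : Fin q → ℕ) (t : Fin q) :
    ∏ k, f k ((α + Pi.single t 1 : Fin q → ℕ) k) = f t (α t + 1) * ∏ k ∈ {t}ᶜ, f k (α k) := by
  rw [Fintype.prod_eq_mul_prod_compl t]
  congr 1
  · simp
  · refine prod_congr rfl fun k hk => ?_
    simp [Pi.single_eq_of_ne (mem_compl.1 hk ∘ mem_singleton.2)]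

lemma succ_mul_prod_cbinom_add_single (w : Fin q → ℂ) (α : Fin q → ℕ) (t : Fin q) :
    ((α t : ℂ) + 1) * ∏ k, cbinom (w k) ((α + Pi.single t 1 : Fin q → ℕ) k) =
      (w t - α t) * ∏ k, cbinom (w k) (α k) := by
  rw [prod_apply_add_single (fun k => cbinom (w k)), Fintype.prod_eq_mul_prod_compl t,
    ← mul_assoc, succ_mul_cbinom_succ, mul_assoc]

lemma prod_pow_add_single {M : Type*} [CommMonoid M] (u : Fin q → M) (α : Fin q → ℕ)
    (t : Fin q) : ∏ k, u k ^ (α + Pi.single t 1 : Fin q → ℕ) k = u t * ∏ k, u k ^ α k := by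
  rw [prod_apply_add_single (fun k => (u k ^ ·)),
    Fintype.prod_eq_mul_prod_compl t (fun k => u k ^ α k), pow_succ', mul_assoc]

/-- `α ↦ α + eₜ` is a bijection from `{|α| = j}` onto `{|β| = j + 1, βₜ ≠ 0}`. -/
lemma sum_antidiagonalTuple_succ_nsmul {M : Type*} [AddCommMonoid M] (j : ℕ) (t : Fin q)
    (F : (Fin q → ℕ) → M) :
    ∑ β ∈ antidiagonalTuple q (j + 1), β t • F β =
      ∑ α ∈ antidiagonalTuple q j, (α t + 1) • F (α + Pi.single t 1) := by
  symm
  refine sum_bij_ne_zero (fun α _ _ => α + Pi.single t 1) ?_ ?_ ?_ ?_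
  · intro α hα _
    rw [mem_antidiagonalTuple] at hα ⊢
    rw [sum_add_single, hα]
  · intro α₁ _ _ α₂ _ _ h
    exact add_right_cancel h
  · intro β hβ hne
    have hβt : β t ≠ 0 := fun h => hne (by simp [h])
    have hback : β - Pi.single t 1 + Pi.single t 1 = β := by
      funext k
      rcases eq_or_ne k t with rfl | hk
      · simp only [Pi.add_apply, Pi.sub_apply, Pi.single_eq_same]
        omega
      · simp [hk]
    have hback_t : (β - Pi.single t 1 : Fin q → ℕ) t + 1 = β t := by
      simpa using congrFun hback t
    refine ⟨β - Pi.single t 1, ?_, by rwa [hback_t, hback], hback⟩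
    rw [mem_antidiagonalTuple] at hβ ⊢
    have := sum_add_single (β - Pi.single t 1) t
    rwa [hback, hβ, add_left_inj, eq_comm] at this
  · intro α _ _
    simp

lemma succ_mul_sum_antidiagonalTuple_succ (j : ℕ) (w u : Fin q → ℂ)
    (G : (Fin q → ℕ) → ℂ) :
    ((j : ℂ) + 1) * ∑ β ∈ antidiagonalTuple q (j + 1),
        (∏ k, cbinom (w k) (β k)) * (∏ k, u k ^ β k) * G β =
      ∑ α ∈ antidiagonalTuple q j, (∏ k, cbinom (w k) (α k)) * (∏ k, u k ^ α k) *
        ∑ t, (w t - α t) * u t * G (α + Pi.single t 1) := by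
  have hdegree : ∀ β ∈ antidiagonalTuple q (j + 1), ((j : ℂ) + 1) = ∑ t, (β t : ℂ) := by
    intro β hβ
    rw [← Nat.cast_sum, mem_antidiagonalTuple.1 hβ]
    push_cast
    ring
  have hshift : ∀ t, ∑ β ∈ antidiagonalTuple q (j + 1),
      (β t : ℂ) * ((∏ k, cbinom (w k) (β k)) * (∏ k, u k ^ β k) * G β) =
        ∑ α ∈ antidiagonalTuple q j, (∏ k, cbinom (w k) (α k)) * (∏ k, u k ^ α k) *
          ((w t - α t) * u t * G (α + Pi.single t 1)) := by
    intro t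
    simp only [← nsmul_eq_mul, sum_antidiagonalTuple_succ_nsmul j t]
    refine sum_congr rfl fun α _ => ?_
    rw [nsmul_eq_mul, prod_pow_add_single]
    push_cast
    linear_combination (u t * (∏ k, u k ^ α k) * G (α + Pi.single t 1)) *
      succ_mul_prod_cbinom_add_single w α t
  rw [mul_sum, sum_congr rfl fun β hβ => by rw [hdegree β hβ, sum_mul], sum_comm,
    sum_congr rfl fun t _ => hshift t, sum_comm]
  simp only [mul_sum]

lemma filter_sum_eq_eq_antidiagonalTuple {n j : ℕ} (hjn : j ≤ n) :
    (Fintype.piFinset fun _ : Fin q => range (n + 1)).filter (fun α => ∑ k, α k = j) =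
      antidiagonalTuple q j := by
  ext α
  simp only [mem_filter, Fintype.mem_piFinset, mem_range, mem_antidiagonalTuple,
    and_iff_right_iff_imp]
  intro hα k
  have := single_le_sum (fun i _ => Nat.zero_le (α i)) (mem_univ k)
  omega

lemma sum_filter_sum_le_eq_sum_range {M : Type*} [AddCommMonoid M] (K : ℕ)
    (f : (Fin q → ℕ) → M) :
    ∑ α ∈ (Fintype.piFinset fun _ : Fin q => range (K + 1)).filter (fun α => ∑ k, α k ≤ K),
        f α =
      ∑ j ∈ range (K + 1), ∑ α ∈ antidiagonalTuple q j, f α := by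
  rw [← sum_fiberwise_of_maps_to (g := fun α : Fin q → ℕ => ∑ k, α k)
    (fun α hα => mem_range_succ_iff.2 (mem_filter.1 hα).2)]
  refine sum_congr rfl fun j hj => ?_
  have hjK := mem_range_succ_iff.1 hj
  rw [← filter_sum_eq_eq_antidiagonalTuple (q := q) hjK, filter_filter]
  congr 1
  ext α
  simp only [mem_filter]
  exact and_congr_right fun _ => ⟨fun h => h.2, fun h => ⟨h ▸ hjK, h⟩⟩

end MultiIndex

section Taylor

lemma hasDerivAt_one_sub_pow (n : ℕ) (y : ℝ) :
    HasDerivAt (fun x : ℝ => (((1 - x) ^ (n + 1) : ℝ) : ℂ))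
      (-((n : ℂ) + 1) * (((1 - y) ^ n : ℝ) : ℂ)) y := by
  refine (((hasDerivAt_id' y).const_sub 1).pow (n + 1)).ofReal_comp.congr_deriv ?_
  push_cast
  ring

lemma succ_mul_integral_one_sub_pow_mul {F F' : ℝ → ℂ}
    (hF : ∀ y ∈ Set.Icc (0 : ℝ) 1, HasDerivAt F (F' y) y)
    (hF' : ContinuousOn F' (Set.Icc 0 1)) (n : ℕ) :
    ((n : ℂ) + 1) * ∫ y in (0 : ℝ)..1, (((1 - y) ^ n : ℝ) : ℂ) * F y =
      F 0 + ∫ y in (0 : ℝ)..1, (((1 - y) ^ (n + 1) : ℝ) : ℂ) * F' y := by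
  have hibp := integral_mul_deriv_eq_deriv_mul (a := 0) (b := 1)
    (fun y _ => hasDerivAt_one_sub_pow n y) (by rwa [Set.uIcc_of_le zero_le_one])
    ((by fun_prop : Continuous _).intervalIntegrable _ _)
    (hF'.intervalIntegrable_of_Icc zero_le_one)
  simp only [mul_assoc, neg_mul, integral_neg, integral_const_mul, sub_self, sub_zero, one_pow,
    zero_pow n.succ_ne_zero, Complex.ofReal_zero, Complex.ofReal_one, zero_mul, one_mul] at hibp
  linear_combination -hibp

/-- Taylor's formula with integral remainder, written for `P j = f⁽ʲ⁾ / j!`. -/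
theorem apply_one_eq_sum_add_integral_one_sub_pow_mul {P : ℕ → ℝ → ℂ}
    (hP : ∀ j, ∀ y ∈ Set.Icc (0 : ℝ) 1, HasDerivAt (P j) (((j : ℂ) + 1) * P (j + 1) y) y)
    (K : ℕ) :
    P 0 1 = ∑ j ∈ range (K + 1), P j 0 +
      ((K : ℂ) + 1) * ∫ y in (0 : ℝ)..1, (((1 - y) ^ K : ℝ) : ℂ) * P (K + 1) y := by
  have hcont : ∀ j, ContinuousOn (P j) (Set.Icc 0 1) := fun j => HasDerivAt.continuousOn (hP j)
  induction K with
  | zero =>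
    have hftc : ∫ y in (0 : ℝ)..1, P 1 y = P 0 1 - P 0 0 :=
      integral_eq_sub_of_hasDerivAt
        (fun y hy => by simpa using hP 0 y (by rwa [Set.uIcc_of_le zero_le_one] at hy))
        ((hcont 1).intervalIntegrable_of_Icc zero_le_one)
    simp [hftc]
  | succ K ih =>
    rw [ih, succ_mul_integral_one_sub_pow_mul (hP (K + 1))
      (continuousOn_const.mul (hcont (K + 2))), sum_range_succ _ (K + 1)]
    simp only [mul_left_comm _ (((K + 1 : ℕ) : ℂ) + 1), integral_const_mul]
    ring

end Taylor

section SegmentPower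

variable {q : ℕ} {c : ℂ} {u : Fin q → ℂ}

lemma re_add_mul_ofReal_pos {v : ℂ} (hc : 0 < c.re) (hcv : 0 < (c + v).re) {y : ℝ}
    (hy : y ∈ Set.Icc (0 : ℝ) 1) : 0 < (c + v * y).re := by
  have hre : (c + v * y).re = (1 - y) * c.re + y * (c + v).re := by
    simp only [Complex.add_re, Complex.mul_re, Complex.ofReal_re, Complex.ofReal_im]
    ring
  rw [hre]
  nlinarith [mul_nonneg hy.1 hcv.le, mul_nonneg (sub_nonneg.2 hy.2) hc.le, hy.1, hy.2]

lemma hasDerivAt_add_mul_ofReal_cpow {v : ℂ} (w : ℂ) {y : ℝ} (hy : 0 < (c + v * y).re) :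
    HasDerivAt (fun x : ℝ => (c + v * x) ^ w) (w * (c + v * y) ^ (w - 1) * v) y := by
  have hlin : HasDerivAt (fun z : ℂ => c + v * z) v y := by
    simpa using ((hasDerivAt_id (y : ℂ)).const_mul v).const_add c
  exact (hlin.cpow_const (Or.inl hy)).comp_ofReal

lemma hasDerivAt_prod_cpow (hc : 0 < c.re) (hcu : ∀ k, 0 < (c + u k).re) (w : Fin q → ℂ)
    (α : Fin q → ℕ) {y : ℝ} (hy : y ∈ Set.Icc (0 : ℝ) 1) :
    HasDerivAt (fun x : ℝ => ∏ k, (c + u k * x) ^ (w k - α k))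
      (∑ t, (w t - α t) * u t *
        ∏ k, (c + u k * y) ^ (w k - (α + Pi.single t 1 : Fin q → ℕ) k)) y := by
  classical
  refine (HasDerivAt.fun_finsetProd fun k _ => hasDerivAt_add_mul_ofReal_cpow (w k - α k)
    (re_add_mul_ofReal_pos hc (hcu k) hy)).congr_deriv (sum_congr rfl fun t _ => ?_)
  rw [prod_apply_add_single (fun k n => (c + u k * y) ^ (w k - n)), compl_singleton,
    smul_eq_mul]
  push_cast
  rw [sub_add_eq_sub_sub]
  ring

lemma continuousOn_prod_cpow (hc : 0 < c.re) (hcu : ∀ k, 0 < (c + u k).re) (v : Fin q → ℂ) :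
    ContinuousOn (fun x : ℝ => ∏ k, (c + u k * x) ^ v k) (Set.Icc 0 1) :=
  continuousOn_finsetProd _ fun k _ => HasDerivAt.continuousOn fun _ hy =>
    hasDerivAt_add_mul_ofReal_cpow (v k) (re_add_mul_ofReal_pos hc (hcu k) hy)

/-- `taylorCoeff c u w j y = g⁽ʲ⁾(y) / j!` for `g(y) = ∏ₖ (c + uₖ y) ^ wₖ`. -/
noncomputable def taylorCoeff (c : ℂ) (u w : Fin q → ℂ) (j : ℕ) (y : ℝ) : ℂ :=
  ∑ α ∈ antidiagonalTuple q j,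
    (∏ k, cbinom (w k) (α k)) * (∏ k, u k ^ α k) * ∏ k, (c + u k * y) ^ (w k - α k)

lemma taylorCoeff_zero (w : Fin q → ℂ) (y : ℝ) :
    taylorCoeff c u w 0 y = ∏ k, (c + u k * y) ^ w k := by
  simp [taylorCoeff, antidiagonalTuple_zero_right, cbinom_zero]

lemma hasDerivAt_taylorCoeff (hc : 0 < c.re) (hcu : ∀ k, 0 < (c + u k).re) (w : Fin q → ℂ)
    (j : ℕ) {y : ℝ} (hy : y ∈ Set.Icc (0 : ℝ) 1) :
    HasDerivAt (taylorCoeff c u w j) (((j : ℂ) + 1) * taylorCoeff c u w (j + 1) y) y := by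
  unfold taylorCoeff
  rw [succ_mul_sum_antidiagonalTuple_succ j w u fun β => ∏ k, (c + u k * y) ^ (w k - β k)]
  exact HasDerivAt.fun_sum fun α _ => (hasDerivAt_prod_cpow hc hcu w α hy).const_mul _

lemma integral_mul_taylorCoeff (hc : 0 < c.re) (hcu : ∀ k, 0 < (c + u k).re) (w : Fin q → ℂ)
    (K j : ℕ) :
    ∫ y in (0 : ℝ)..1, (((1 - y) ^ K : ℝ) : ℂ) * taylorCoeff c u w j y =
      ∑ α ∈ antidiagonalTuple q j, (∏ k, cbinom (w k) (α k)) * (∏ k, u k ^ α k) *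
        ∫ y in (0 : ℝ)..1, (((1 - y) ^ K : ℝ) : ℂ) * ∏ k, (c + u k * y) ^ (w k - α k) := by
  simp only [taylorCoeff, mul_sum]
  rw [integral_finsetSum]
  · refine sum_congr rfl fun α _ => ?_
    rw [← integral_const_mul]
    congr 1
    ext y
    ring
  · intro α _
    refine ContinuousOn.intervalIntegrable_of_Icc zero_le_one ?_
    exact (by fun_prop : Continuous fun y : ℝ => (((1 - y) ^ K : ℝ) : ℂ)).continuousOn.mul
      (continuousOn_const.mul (continuousOn_prod_cpow hc hcu fun k => w k - α k))

theorem prod_cpow_eq_sum_add_integral (hc : 0 < c.re) (hcu : ∀ k, 0 < (c + u k).re)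
    (w : Fin q → ℂ) (K : ℕ) :
    ∏ k, (c + u k) ^ w k =
      (∑ α ∈ (Fintype.piFinset fun _ : Fin q => range (K + 1)).filter
          fun α => ∑ k, α k ≤ K,
        (∏ k, cbinom (w k) (α k)) * (∏ k, u k ^ α k) * ∏ k, c ^ (w k - α k)) +
      ((K : ℂ) + 1) *
        ∑ α ∈ (Fintype.piFinset fun _ : Fin q => range (K + 2)).filter
            fun α => ∑ k, α k = K + 1,
          (∏ k, cbinom (w k) (α k)) * (∏ k, u k ^ α k) *
            ∫ y in (0 : ℝ)..1, (((1 - y) ^ K : ℝ) : ℂ) * ∏ k, (c + u k * y) ^ (w k - α k) := by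
  have htaylor := apply_one_eq_sum_add_integral_one_sub_pow_mul
    (fun j _ hy => hasDerivAt_taylorCoeff hc hcu w j hy) K
  rw [taylorCoeff_zero, integral_mul_taylorCoeff hc hcu] at htaylor
  rw [sum_filter_sum_le_eq_sum_range, filter_sum_eq_eq_antidiagonalTuple le_rfl]
  simpa [taylorCoeff] using htaylor

end SegmentPower

section Summation

open Complex

lemma ofReal_mul_cpow {r : ℝ} (hr : 0 < r) {z : ℂ} (hz : z ≠ 0) (w : ℂ) :
    ((r : ℂ) * z) ^ w = (r : ℂ) ^ w * z ^ w := by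
  have hr' : (r : ℂ) ≠ 0 := ofReal_ne_zero.2 hr.ne'
  rw [cpow_def_of_ne_zero (mul_ne_zero hr' hz), log_ofReal_mul hr hz, cpow_def_of_ne_zero hz,
    cpow_def_of_ne_zero hr', ← ofReal_log hr.le, add_mul, exp_add]

lemma cpow_finset_sum {z : ℂ} (hz : z ≠ 0) {ι : Type*} (s : Finset ι) (f : ι → ℂ) :
    z ^ (∑ i ∈ s, f i) = ∏ i ∈ s, z ^ f i := by
  simp only [cpow_def_of_ne_zero hz, mul_sum, exp_sum]

lemma hasSum_natCast_add_one_cpow_neg {W : ℂ} (hW : 1 < W.re) :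
    HasSum (fun m : ℕ => ((m : ℂ) + 1) ^ (-W)) (riemannZeta W) := by
  have hsum : Summable fun m : ℕ => 1 / ((m : ℂ) + 1) ^ W := by
    simpa using (summable_nat_add_iff 1).2 (summable_one_div_nat_cpow.2 hW)
  simpa [cpow_neg, zeta_eq_tsum_one_div_nat_add_one_cpow hW] using hsum.hasSum

variable {q : ℕ} {γ : ℂ} {u : Fin q → ℂ}

lemma re_mul_natCast_add_one_pos (hγ : 0 < γ.re) (m : ℕ) : 0 < (γ * ((m : ℂ) + 1)).re := by
  simpa using mul_pos hγ (by positivity : (0 : ℝ) < m + 1)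

lemma re_mul_natCast_add_one_add_pos (hγ : 0 < γ.re) {v : ℂ} (hv : 0 < (γ + v).re) (m : ℕ) :
    0 < (γ * ((m : ℂ) + 1) + v).re := by
  have hre : (γ * ((m : ℂ) + 1) + v).re = (γ + v).re + m * γ.re := by
    simp only [add_re, mul_re, natCast_re, one_re, add_im, natCast_im, one_im, add_zero,
      mul_zero, sub_zero]
    ring
  rw [hre]
  exact add_pos_of_pos_of_nonneg hv (by positivity)

lemma hasSum_prod_mul_natCast_add_one_cpow (hγ : γ ≠ 0) (v : Fin q → ℂ)
    (hv : (∑ k, v k).re < -1) :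
    HasSum (fun m : ℕ => ∏ k, (γ * ((m : ℂ) + 1)) ^ v k)
      (γ ^ (∑ k, v k) * riemannZeta (-∑ k, v k)) := by
  have hterm : ∀ m : ℕ,
      ∏ k, (γ * ((m : ℂ) + 1)) ^ v k = γ ^ (∑ k, v k) * ((m : ℂ) + 1) ^ (-(-∑ k, v k)) := by
    intro m
    have hsplit := fun k => ofReal_mul_cpow (by positivity : (0 : ℝ) < m + 1) hγ (v k)
    push_cast at hsplit
    rw [neg_neg, cpow_finset_sum (Nat.cast_add_one_ne_zero m), cpow_finset_sum hγ,
      ← prod_mul_distrib]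
    exact prod_congr rfl fun k _ => by rw [mul_comm γ, hsplit, mul_comm]
  simp only [hterm]
  exact (hasSum_natCast_add_one_cpow_neg (by simpa using neg_lt_neg hv)).mul_left _

lemma prod_mul_ofReal_add_cpow (hγ : 0 < γ.re) (hu : ∀ k, 0 < (γ + u k).re) (v : Fin q → ℂ)
    {r : ℝ} (hr : 1 ≤ r) {y : ℝ} (hy : y ∈ Set.Icc (0 : ℝ) 1) :
    ∏ k, (γ * r + u k * y) ^ v k = (r : ℂ) ^ (∑ k, v k) * ∏ k, (γ + u k * ↑(y / r)) ^ v k := by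
  have hr0 : 0 < r := zero_lt_one.trans_le hr
  have hr' : (r : ℂ) ≠ 0 := ofReal_ne_zero.2 hr0.ne'
  have hyr := unitInterval.div_mem hy.1 hr0.le (hy.2.trans hr)
  have hfactor : ∀ k,
      (γ * r + u k * y) ^ v k = (r : ℂ) ^ v k * (γ + u k * ↑(y / r)) ^ v k := by
    intro k
    rw [← ofReal_mul_cpow hr0 (ne_zero_of_re_pos (re_add_mul_ofReal_pos hγ (hu k) hyr))]
    congr 1
    push_cast
    field_simp
  rw [prod_congr rfl fun k _ => hfactor k, prod_mul_distrib, cpow_finset_sum hr']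

lemma summable_integral_prod_mul_natCast_add_one_cpow (hγ : 0 < γ.re)
    (hu : ∀ k, 0 < (γ + u k).re) (v : Fin q → ℂ) (hv : (∑ k, v k).re < -1) (K : ℕ) :
    Summable fun m : ℕ => ∫ y in (0 : ℝ)..1,
      (((1 - y) ^ K : ℝ) : ℂ) * ∏ k, (γ * ((m : ℂ) + 1) + u k * y) ^ v k := by
  obtain ⟨B, hB⟩ := isCompact_Icc.exists_bound_of_continuousOn (continuousOn_prod_cpow hγ hu v)
  refine Summable.of_norm_bounded (g := fun m : ℕ => B * ((m : ℝ) + 1) ^ (∑ k, v k).re) ?_ ?_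
  · have := (summable_nat_add_iff 1).2 (Real.summable_nat_rpow.2 hv)
    push_cast at this
    exact this.mul_left B
  · intro m
    have hm : (1 : ℝ) ≤ m + 1 := by simp
    have hbound : ∀ y ∈ Set.uIoc (0 : ℝ) 1, ‖(((1 - y) ^ K : ℝ) : ℂ) *
        ∏ k, (γ * ((m + 1 : ℝ) : ℂ) + u k * y) ^ v k‖ ≤ B * ((m : ℝ) + 1) ^ (∑ k, v k).re := by
      intro y hy
      have hy : y ∈ Set.Icc (0 : ℝ) 1 := Set.Ioc_subset_Icc_self (by simpa using hy)
      rw [prod_mul_ofReal_add_cpow hγ hu v hm hy, norm_mul, norm_mul,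
        norm_cpow_eq_rpow_re_of_pos (by positivity)]
      have hweight : ‖(((1 - y) ^ K : ℝ) : ℂ)‖ ≤ 1 := by
        rw [norm_real, norm_pow, Real.norm_eq_abs, abs_of_nonneg (sub_nonneg.2 hy.2)]
        exact pow_le_one₀ (sub_nonneg.2 hy.2) (by linarith [hy.1])
      have hprod := hB _ (unitInterval.div_mem hy.1 (by positivity) (hy.2.trans hm))
      calc _ ≤ 1 * (((m : ℝ) + 1) ^ (∑ k, v k).re * B) := by gcongr
        _ = _ := by ring
    simpa using norm_integral_le_of_norm_le_const hbound

end Summation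

theorem stmt13_general (q : ℕ) (γ : ℂ) (u : Fin q → ℂ)
    (hγ : 0 < γ.re) (hu : ∀ k, 0 < (u k + γ).re) (K : ℕ)
    (s : Fin q → ℂ) (hs : 1 < (∑ k, s k).re) :
    (∑' m : ℕ, ∏ k, (γ * ((m : ℂ) + 1) + u k) ^ (-(s k))) =
      (∑ α ∈ (Fintype.piFinset fun _ : Fin q => Finset.range (K + 1)).filter
          fun α => ∑ k, α k ≤ K,
        (∏ k, cbinom (-(s k)) (α k)) * (∏ k, u k ^ α k) *
          γ ^ (-(∑ k, s k) - ∑ k, (α k : ℂ)) *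
          riemannZeta ((∑ k, s k) + ∑ k, (α k : ℂ))) +
      ((K : ℂ) + 1) *
        ∑ α ∈ (Fintype.piFinset fun _ : Fin q => Finset.range (K + 2)).filter
            fun α => ∑ k, α k = K + 1,
          (∏ k, cbinom (-(s k)) (α k)) * (∏ k, u k ^ α k) *
            ∑' m : ℕ, ∫ y in (0 : ℝ)..1,
              (((1 - y) ^ K : ℝ) : ℂ) *
                ∏ k, (γ * ((m : ℂ) + 1) + u k * (y : ℂ)) ^ (-(s k) - (α k : ℂ)) := by
  have hγu : ∀ k, 0 < (γ + u k).re := fun k => add_comm (u k) γ ▸ hu k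
  have hexponent : ∀ α : Fin q → ℕ,
      ∑ k, (-(s k) - (α k : ℂ)) = -(∑ k, s k) - ∑ k, (α k : ℂ) := fun α => by
    rw [sum_sub_distrib, sum_neg_distrib]
  have hdecay : ∀ α : Fin q → ℕ, (∑ k, (-(s k) - (α k : ℂ))).re < -1 := fun α => by
    rw [hexponent, ← Nat.cast_sum]
    simp only [Complex.sub_re, Complex.neg_re, Complex.natCast_re]
    linarith [(Nat.cast_nonneg _ : (0 : ℝ) ≤ ↑(∑ k, α k))]
  refine HasSum.tsum_eq ?_
  simp only [fun m => prod_cpow_eq_sum_add_integral (re_mul_natCast_add_one_pos hγ m)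
    (fun k => re_mul_natCast_add_one_add_pos hγ (hγu k) m) (fun k => -(s k)) K]
  refine (hasSum_sum fun α _ => ?_).add ((hasSum_sum fun α _ => ?_).mul_left _)
  · have hmain := (hasSum_prod_mul_natCast_add_one_cpow (Complex.ne_zero_of_re_pos hγ) _
      (hdecay α)).mul_left ((∏ k, cbinom (-(s k)) (α k)) * (∏ k, u k ^ α k))
    rwa [hexponent, neg_sub, sub_neg_eq_add, add_comm, ← mul_assoc] at hmain
  · exact (summable_integral_prod_mul_natCast_add_one_cpow hγ hγu _ (hdecay α) K).hasSum.mul_left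
      _

/-- the case `n = 1` Taylor expansion of `Z_{1,q}` in terms of the Riemann
zeta-function, with the explicit remainder `R_K`. The finsets over which `α` ranges are
exactly `{α ∈ ℕ₀^q : |α| ≤ K}` and `{α ∈ ℕ₀^q : |α| = K+1}`. -/
theorem stmt13 (q : ℕ) (hq : 1 ≤ q) (γ : ℂ) (u : Fin q → ℂ)
    (hγ : 0 < γ.re) (hu : ∀ k, 0 < (u k + γ).re) (K : ℕ)
    (s : Fin q → ℂ) (hs : 1 < (∑ k, s k).re) :
    (∑' m : ℕ, ∏ k, (γ * ((m : ℂ) + 1) + u k) ^ (-(s k))) =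
      (∑ α ∈ (Fintype.piFinset fun _ : Fin q => Finset.range (K + 1)).filter
          fun α => ∑ k, α k ≤ K,
        (∏ k, cbinom (-(s k)) (α k)) * (∏ k, u k ^ α k) *
          γ ^ (-(∑ k, s k) - ∑ k, (α k : ℂ)) *
          riemannZeta ((∑ k, s k) + ∑ k, (α k : ℂ))) +
      ((K : ℂ) + 1) *
        ∑ α ∈ (Fintype.piFinset fun _ : Fin q => Finset.range (K + 2)).filter
            fun α => ∑ k, α k = K + 1,
          (∏ k, cbinom (-(s k)) (α k)) * (∏ k, u k ^ α k) *
            ∑' m : ℕ, ∫ y in (0 : ℝ)..1,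
              (((1 - y) ^ K : ℝ) : ℂ) *
                ∏ k, (γ * ((m : ℂ) + 1) + u k * (y : ℂ)) ^ (-(s k) - (α k : ℂ)) :=
  stmt13_general q γ u hγ hu K s hs
end
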